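/- The Uhlmann fidelity between two Poisson states in the Poisson limit equals exp(−(N+N')/2 + F(Γ,Γ')): if ρ_M = ((1−N/M)τ₀ ⊕ (N/M)τ₁)^{⊗M} and ρ'_M = ((1−N'/M)τ₀ ⊕ (N'/M)τ₁')^{⊗M}, then lim_{M→∞} F(ρ_M, ρ'_M) = exp(−(N+N')/2 + √(N N') F(τ₁,τ₁')). -/

import Mathlib

/-!
Fidelity is multiplicative under tensor powers, additive over direct sums and scales like
`√(c c')` under `A, B ↦ c A, c' B`. Hence `F(ρ_M, ρ'_M) = g(1/M) ^ M` with
`g h = √((1 - N h)(1 - N' h)) + h √(N N') F(τ₁, τ₁')`. Since `g 0 = 1`, the limit is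
`exp (g' 0)`, and `g' 0 = -(N + N')/2 + √(N N') F(τ₁, τ₁')`.
-/

open Matrix Kronecker ComplexOrder Filter

open Classical in
/-- Square root of a positive semidefinite matrix (junk value `0` otherwise). -/
noncomputable def matSqrt {n : Type*} [Fintype n] [DecidableEq n]
    (A : Matrix n n ℂ) : Matrix n n ℂ :=
  if h : A.PosSemidef then
    h.1.eigenvectorUnitary.1 * diagonal ((↑) ∘ (√·) ∘ h.1.eigenvalues) *
      (star h.1.eigenvectorUnitary : Matrix n n ℂ)
  else 0

/-- Uhlmann fidelity F(A,B) = tr sqrt( sqrt A * B * sqrt A ). -/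
noncomputable def fid {n : Type*} [Fintype n] [DecidableEq n]
    (A B : Matrix n n ℂ) : ℝ :=
  ((matSqrt (matSqrt A * B * matSqrt A)).trace).re

/-- `M`-fold tensor power of a matrix, realized on the index set `Fin M → k`. -/
noncomputable def tpow {k : Type*} (τ : Matrix k k ℂ) (M : ℕ) :
    Matrix (Fin M → k) (Fin M → k) ℂ :=
  Matrix.of fun i j => ∏ m, τ (i m) (j m)

/-- The single-temporal-mode rare state `(1 − N/M) τ₀ ⊕ (N/M) τ₁`, where `τ₀` is the
unique density operator on a 1-dimensional space. -/
noncomputable def rareState {d : ℕ} (N : ℝ) (τ₁ : Matrix (Fin d) (Fin d) ℂ) (M : ℕ) :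
    Matrix (Unit ⊕ Fin d) (Unit ⊕ Fin d) ℂ :=
  Matrix.fromBlocks (((1 - N / M : ℝ) : ℂ) • 1) 0 0 (((N / M : ℝ) : ℂ) • τ₁)

open Topology

section MatSqrt

variable {n : Type*} [Fintype n] [DecidableEq n]

open scoped MatrixOrder in
theorem matSqrt_eq_cfcSqrt {A : Matrix n n ℂ} (hA : A.PosSemidef) : matSqrt A = CFC.sqrt A := by
  rw [matSqrt, dif_pos hA, CFC.sqrt_eq_cfc, cfc_nnreal_eq_real _ A, hA.1.cfc_eq]
  simp only [IsHermitian.cfc, Unitary.conjStarAlgAut_apply]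
  congr 3
  funext x
  simp only [Function.comp_apply]
  rw [Real.sqrt.eq_1]
  rfl

open scoped MatrixOrder in
theorem matSqrt_eq_of_mul_self {A S : Matrix n n ℂ} (hS : S.PosSemidef) (h : S * S = A) :
    matSqrt A = S := by
  have hA : A.PosSemidef := by
    simpa only [hS.1.eq, h] using posSemidef_conjTranspose_mul_self S
  rw [matSqrt_eq_cfcSqrt hA]
  exact CFC.sqrt_unique h hS.nonneg

open scoped MatrixOrder in
theorem posSemidef_matSqrt (A : Matrix n n ℂ) : (matSqrt A).PosSemidef := by
  by_cases hA : A.PosSemidef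
  · rw [matSqrt_eq_cfcSqrt hA]
    exact (CFC.sqrt_nonneg A).posSemidef
  · rw [matSqrt, dif_neg hA]
    exact PosSemidef.zero

open scoped MatrixOrder in
theorem matSqrt_mul_self {A : Matrix n n ℂ} (hA : A.PosSemidef) : matSqrt A * matSqrt A = A := by
  rw [matSqrt_eq_cfcSqrt hA]
  exact CFC.sqrt_mul_sqrt_self A hA.nonneg

theorem conjTranspose_matSqrt_mul_matSqrt {A : Matrix n n ℂ} (hA : A.PosSemidef) :
    (matSqrt A)ᴴ * matSqrt A = A := by
  rw [(posSemidef_matSqrt A).1.eq, matSqrt_mul_self hA]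

theorem posSemidef_matSqrt_mul_mul_matSqrt (A : Matrix n n ℂ) {B : Matrix n n ℂ}
    (hB : B.PosSemidef) : (matSqrt A * B * matSqrt A).PosSemidef := by
  simpa only [(posSemidef_matSqrt A).1.eq] using hB.mul_mul_conjTranspose_same (matSqrt A)

theorem matSqrt_real_smul {A : Matrix n n ℂ} (hA : A.PosSemidef) {c : ℝ} (hc : 0 ≤ c) :
    matSqrt ((c : ℂ) • A) = (√c : ℂ) • matSqrt A := by
  refine matSqrt_eq_of_mul_self ((posSemidef_matSqrt A).smul (by simp)) ?_
  rw [smul_mul_smul_comm, matSqrt_mul_self hA, ← Complex.ofReal_mul, Real.mul_self_sqrt hc]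

theorem matSqrt_one : matSqrt (1 : Matrix n n ℂ) = 1 :=
  matSqrt_eq_of_mul_self PosSemidef.one (one_mul 1)

end MatSqrt

theorem Matrix.trace_fromBlocks {R n m : Type*} [AddCommMonoid R] [Fintype n] [Fintype m]
    (A : Matrix n n R) (B : Matrix n m R) (C : Matrix m n R) (D : Matrix m m R) :
    (fromBlocks A B C D).trace = A.trace + D.trace := by
  simp [trace, Fintype.sum_sum_type]

section Fidelity

variable {n m : Type*} [Fintype n] [DecidableEq n] [Fintype m] [DecidableEq m]

theorem ofReal_fid (A B : Matrix n n ℂ) :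
    (fid A B : ℂ) = (matSqrt (matSqrt A * B * matSqrt A)).trace :=
  (Complex.eq_re_of_ofReal_le (r := 0)
    (by simpa using (posSemidef_matSqrt (matSqrt A * B * matSqrt A)).trace_nonneg)).symm

theorem fid_one_one : fid (1 : Matrix n n ℂ) 1 = Fintype.card n := by
  simp [fid, matSqrt_one]

theorem fid_real_smul {A B : Matrix n n ℂ} (hA : A.PosSemidef) (hB : B.PosSemidef)
    {c c' : ℝ} (hc : 0 ≤ c) (hc' : 0 ≤ c') :
    fid ((c : ℂ) • A) ((c' : ℂ) • B) = √(c * c') * fid A B := by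
  have hsandwich : (√c : ℂ) • matSqrt A * ((c' : ℂ) • B) * ((√c : ℂ) • matSqrt A)
      = ((c * c' : ℝ) : ℂ) • (matSqrt A * B * matSqrt A) := by
    rw [smul_mul_smul_comm, smul_mul_smul_comm, mul_right_comm, ← Complex.ofReal_mul,
      Real.mul_self_sqrt hc, ← Complex.ofReal_mul]
  rw [fid, matSqrt_real_smul hA hc, hsandwich,
    matSqrt_real_smul (posSemidef_matSqrt_mul_mul_matSqrt A hB) (mul_nonneg hc hc'),
    trace_smul, smul_eq_mul, Complex.re_ofReal_mul, fid]

theorem Matrix.PosSemidef.fromBlocks_zero {A : Matrix n n ℂ} {B : Matrix m m ℂ}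
    (hA : A.PosSemidef) (hB : B.PosSemidef) : (fromBlocks A 0 0 B).PosSemidef := by
  rw [← conjTranspose_matSqrt_mul_matSqrt hA, ← conjTranspose_matSqrt_mul_matSqrt hB]
  simpa [fromBlocks_conjTranspose, fromBlocks_multiply] using
    posSemidef_conjTranspose_mul_self (fromBlocks (matSqrt A) 0 0 (matSqrt B))

theorem matSqrt_fromBlocks_zero {A : Matrix n n ℂ} {B : Matrix m m ℂ}
    (hA : A.PosSemidef) (hB : B.PosSemidef) :
    matSqrt (fromBlocks A 0 0 B) = fromBlocks (matSqrt A) 0 0 (matSqrt B) := by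
  refine matSqrt_eq_of_mul_self
    ((posSemidef_matSqrt A).fromBlocks_zero (posSemidef_matSqrt B)) ?_
  simp [fromBlocks_multiply, matSqrt_mul_self hA, matSqrt_mul_self hB]

theorem fid_fromBlocks_zero {A A' : Matrix n n ℂ} {B B' : Matrix m m ℂ}
    (hA : A.PosSemidef) (hA' : A'.PosSemidef) (hB : B.PosSemidef) (hB' : B'.PosSemidef) :
    fid (fromBlocks A 0 0 B) (fromBlocks A' 0 0 B') = fid A A' + fid B B' := by
  rw [fid, matSqrt_fromBlocks_zero hA hB]
  simp only [fromBlocks_multiply, Matrix.mul_zero, Matrix.zero_mul, add_zero, zero_add]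
  rw [matSqrt_fromBlocks_zero (posSemidef_matSqrt_mul_mul_matSqrt A hA')
    (posSemidef_matSqrt_mul_mul_matSqrt B hB'), trace_fromBlocks, Complex.add_re, fid, fid]

end Fidelity

section TensorPower

variable {k : Type*}

theorem conjTranspose_tpow (A : Matrix k k ℂ) (M : ℕ) : (tpow A M)ᴴ = tpow Aᴴ M := by
  ext i j
  simp [tpow, conjTranspose_apply, star_prod]

variable [Fintype k]

theorem tpow_mul (A B : Matrix k k ℂ) (M : ℕ) : tpow A M * tpow B M = tpow (A * B) M := by
  ext i l
  simp only [tpow, mul_apply, of_apply, ← Finset.prod_mul_distrib]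
  exact (Fintype.prod_sum fun m x => A (i m) x * B x (l m)).symm

theorem trace_tpow (A : Matrix k k ℂ) (M : ℕ) : (tpow A M).trace = A.trace ^ M :=
  (Fintype.sum_pow (fun x => A x x) M).symm

variable [DecidableEq k]

theorem Matrix.PosSemidef.tpow {A : Matrix k k ℂ} (hA : A.PosSemidef) (M : ℕ) :
    (tpow A M).PosSemidef := by
  rw [← conjTranspose_matSqrt_mul_matSqrt hA, ← tpow_mul, ← conjTranspose_tpow]
  exact posSemidef_conjTranspose_mul_self _

theorem matSqrt_tpow {A : Matrix k k ℂ} (hA : A.PosSemidef) (M : ℕ) :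
    matSqrt (tpow A M) = tpow (matSqrt A) M :=
  matSqrt_eq_of_mul_self ((posSemidef_matSqrt A).tpow M) (by rw [tpow_mul, matSqrt_mul_self hA])

theorem fid_tpow {A B : Matrix k k ℂ} (hA : A.PosSemidef) (hB : B.PosSemidef) (M : ℕ) :
    fid (tpow A M) (tpow B M) = fid A B ^ M := by
  rw [fid, matSqrt_tpow hA, tpow_mul, tpow_mul,
    matSqrt_tpow (posSemidef_matSqrt_mul_mul_matSqrt A hB), trace_tpow, ← ofReal_fid,
    ← Complex.ofReal_pow, Complex.ofReal_re]

end TensorPower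

section RareState

variable {d : ℕ} {N : ℝ} {τ : Matrix (Fin d) (Fin d) ℂ} {M : ℕ}

theorem posSemidef_rareState (hτ : τ.PosSemidef) (hN : 0 ≤ N) (hNM : N ≤ M) :
    (rareState N τ M).PosSemidef :=
  (PosSemidef.one.smul (Complex.zero_le_real.mpr
    (sub_nonneg.mpr (div_le_one_of_le₀ hNM M.cast_nonneg)))).fromBlocks_zero
    (hτ.smul (Complex.zero_le_real.mpr (div_nonneg hN M.cast_nonneg)))

theorem fid_rareState {N' : ℝ} {τ' : Matrix (Fin d) (Fin d) ℂ}
    (hτ : τ.PosSemidef) (hτ' : τ'.PosSemidef)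
    (hN : 0 ≤ N) (hN' : 0 ≤ N') (hNM : N ≤ M) (hN'M : N' ≤ M) :
    fid (rareState N τ M) (rareState N' τ' M)
      = √((1 - N / M) * (1 - N' / M)) + √(N * N') * fid τ τ' / M := by
  have hα : 0 ≤ 1 - N / M := sub_nonneg.mpr (div_le_one_of_le₀ hNM M.cast_nonneg)
  have hα' : 0 ≤ 1 - N' / M := sub_nonneg.mpr (div_le_one_of_le₀ hN'M M.cast_nonneg)
  have hβ : 0 ≤ N / M := div_nonneg hN M.cast_nonneg
  have hβ' : 0 ≤ N' / M := div_nonneg hN' M.cast_nonneg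
  rw [rareState, rareState,
    fid_fromBlocks_zero (PosSemidef.one.smul (Complex.zero_le_real.mpr hα))
      (PosSemidef.one.smul (Complex.zero_le_real.mpr hα'))
      (hτ.smul (Complex.zero_le_real.mpr hβ)) (hτ'.smul (Complex.zero_le_real.mpr hβ')),
    fid_real_smul PosSemidef.one PosSemidef.one hα hα', fid_real_smul hτ hτ' hβ hβ',
    fid_one_one, div_mul_div_comm, Real.sqrt_div' _ (mul_self_nonneg _),
    Real.sqrt_mul_self M.cast_nonneg]
  simp only [Fintype.card_unit, Nat.cast_one, mul_one]
  ring

end RareState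

theorem tendsto_pow_inv_natCast_exp_of_hasDerivAt {g : ℝ → ℝ} {L : ℝ}
    (hg : HasDerivAt g L 0) (hg0 : g 0 = 1) :
    Tendsto (fun M : ℕ => g (M : ℝ)⁻¹ ^ M) atTop (𝓝 (Real.exp L)) := by
  have hslope : Tendsto (fun M : ℕ => (M : ℝ) * (g (M : ℝ)⁻¹ - 1)) atTop (𝓝 L) := by
    simpa [hg0, Function.comp_def] using hg.tendsto_slope_zero_right.comp
      (tendsto_inv_atTop_nhdsGT_zero.comp tendsto_natCast_atTop_atTop)
  simpa using Real.tendsto_one_add_pow_exp_of_tendsto hslope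

theorem poisson_states_fidelity_general {d : ℕ} (τ₁ τ₁' : Matrix (Fin d) (Fin d) ℂ)
    (hτ₁ : τ₁.PosSemidef)
    (hτ₁' : τ₁'.PosSemidef)
    (N N' : ℝ) (hN : 0 < N) (hN' : 0 < N') :
    Filter.Tendsto
      (fun M : ℕ => fid (tpow (rareState N τ₁ M) M) (tpow (rareState N' τ₁' M) M))
      Filter.atTop
      (nhds (Real.exp (-(N + N') / 2 + Real.sqrt (N * N') * fid τ₁ τ₁'))) := by
  set c := √(N * N') * fid τ₁ τ₁'
  have hg : HasDerivAt (fun h => √((1 - N * h) * (1 - N' * h)) + c * h)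
      (-(N + N') / 2 + c) 0 := by
    have hprod : HasDerivAt (fun h : ℝ => (1 - N * h) * (1 - N' * h)) (-N - N') 0 :=
      ((((hasDerivAt_id' 0).const_mul N).const_sub 1).mul
        (((hasDerivAt_id' 0).const_mul N').const_sub 1)).congr_deriv (by ring)
    refine ((hprod.sqrt (by simp)).add ((hasDerivAt_id' 0).const_mul c)).congr_deriv ?_
    norm_num
    ring
  refine (tendsto_pow_inv_natCast_exp_of_hasDerivAt hg (by simp)).congr' ?_
  filter_upwards [eventually_ge_atTop ⌈max N N'⌉₊] with M hM
  obtain ⟨hNM, hN'M⟩ := max_le_iff.mp (Nat.ceil_le.mp hM)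
  rw [fid_tpow (posSemidef_rareState hτ₁ hN.le hNM) (posSemidef_rareState hτ₁' hN'.le hN'M),
    fid_rareState hτ₁ hτ₁' hN.le hN'.le hNM hN'M]
  simp only [div_eq_mul_inv, c]

/-- The Uhlmann fidelity between two Poisson states in the Poisson limit equals
`exp(−(N+N')/2 + F(Γ,Γ'))` with `F(Γ,Γ') = √(N N') F(τ₁,τ₁')`. -/
theorem poisson_states_fidelity {d : ℕ} (τ₁ τ₁' : Matrix (Fin d) (Fin d) ℂ)
    (hτ₁ : τ₁.PosSemidef) (hτ₁tr : τ₁.trace = 1)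
    (hτ₁' : τ₁'.PosSemidef) (hτ₁'tr : τ₁'.trace = 1)
    (N N' : ℝ) (hN : 0 < N) (hN' : 0 < N') :
    Filter.Tendsto
      (fun M : ℕ => fid (tpow (rareState N τ₁ M) M) (tpow (rareState N' τ₁' M) M))
      Filter.atTop
      (nhds (Real.exp (-(N + N') / 2 + Real.sqrt (N * N') * fid τ₁ τ₁'))) :=
  poisson_states_fidelity_general τ₁ τ₁' hτ₁ hτ₁' N N' hN hN'
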